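/- For every m with 1 ≤ m ≤ n-1 and every element u of the free group F, one has Ψ_{σ_m}(Ψ_{σ_m}(u)) =_R p_{m,m+1}^{-1} u p_{m,m+1}, i.e. π(Ψ_{σ_m}(Ψ_{σ_m}(u))) = π(p_{m,m+1})^{-1} π(u) π(p_{m,m+1}) in the presented group G. -/

import Mathlib

namespace PureHilden

/-- The three symbols `p`, `x`, `y`. -/
inductive Sym : Type
  | p | x | y
  deriving DecidableEq

open Sym

/-- Generators of the free group `F`:  `p_{ij}, x_{ij}, y_{ij}` for `1 ≤ i < j ≤ n`
and `t_k` for `1 ≤ k ≤ n`. -/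
inductive Gen (n : ℕ) : Type
  | pair (s : Sym) (i j : ℕ) (h : 1 ≤ i ∧ i < j ∧ j ≤ n) : Gen n
  | t (k : ℕ) (h : 1 ≤ k ∧ k ≤ n) : Gen n

/-- The free group `F` on the set `S`. -/
abbrev FG (n : ℕ) := FreeGroup (Gen n)

/-- `α_{ij}` (symmetrised: `α_{ji} = α_{ij}`); junk value `1` for invalid indices. -/
def gsym (n : ℕ) (s : Sym) (i j : ℕ) : FG n :=
  if h : 1 ≤ min i j ∧ min i j < max i j ∧ max i j ≤ n then
    FreeGroup.of (Gen.pair s (min i j) (max i j) h)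
  else 1

def P (n i j : ℕ) : FG n := gsym n Sym.p i j
def X (n i j : ℕ) : FG n := gsym n Sym.x i j
def Y (n i j : ℕ) : FG n := gsym n Sym.y i j

def T (n k : ℕ) : FG n :=
  if h : 1 ≤ k ∧ k ≤ n then FreeGroup.of (Gen.t k h) else 1

/-- `1 ≤ k ≤ n`. -/
def Idx (n k : ℕ) : Prop := 1 ≤ k ∧ k ≤ n

/-- `1 ≤ i < j ≤ n`. -/
def Idx2 (n i j : ℕ) : Prop := 1 ≤ i ∧ i < j ∧ j ≤ n

/-- `(i,j,k)` is a cyclic rotation of a strictly increasing triple. -/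
def cyc3 (i j k : ℕ) : Prop := (i < j ∧ j < k) ∨ (j < k ∧ k < i) ∨ (k < i ∧ i < j)

/-- `(i,j,k,l)` is a cyclic rotation of a strictly increasing quadruple. -/
def cyc4 (i j k l : ℕ) : Prop :=
  (i < j ∧ j < k ∧ k < l) ∨ (j < k ∧ k < l ∧ l < i) ∨
  (k < l ∧ l < i ∧ i < j) ∨ (l < i ∧ i < j ∧ j < k)

def c2A : List (Sym × Sym × Sym) :=
  [(p,p,p),(p,y,y),(x,p,p),(x,x,p),(x,y,y),(y,p,p),(y,p,x),(y,y,y)]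
def c2B : List (Sym × Sym × Sym) :=
  [(p,p,p),(p,x,y),(x,p,p),(x,p,x),(x,x,y),(y,p,p),(y,x,y),(y,y,p)]
def c2C : List (Sym × Sym × Sym) :=
  [(p,p,p),(p,x,x),(x,p,p),(x,x,x),(x,y,p),(y,p,p),(y,p,y),(y,x,x)]

/-- The allowed triples `(α,β,γ)` for relation (C2), by cyclic ordering of `(i,j,k)`. -/
def C2ok (i j k : ℕ) (a b c : Sym) : Prop :=
  (i < j ∧ j < k ∧ (a,b,c) ∈ c2A) ∨
  (j < k ∧ k < i ∧ (a,b,c) ∈ c2B) ∨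
  (k < i ∧ i < j ∧ (a,b,c) ∈ c2C)

/-- The relations `R`, encoded as the words `u * v⁻¹` for each relation `u = v`. -/
inductive Rel (n : ℕ) : FG n → Prop
  | cpt {i j k : ℕ} (hij : Idx2 n i j) (hk : Idx n k) :
      Rel n (P n i j * T n k * (T n k * P n i j)⁻¹)
  | ctt {i j : ℕ} (hi : Idx n i) (hj : Idx n j) :
      Rel n (T n i * T n j * (T n j * T n i)⁻¹)
  | cxt {i j k : ℕ} (hij : Idx2 n i j) (hk : Idx n k) (hne : k ≠ i) :
      Rel n (X n i j * T n k * (T n k * X n i j)⁻¹)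
  | cyt {i j k : ℕ} (hij : Idx2 n i j) (hk : Idx n k) (hne : k ≠ j) :
      Rel n (Y n i j * T n k * (T n k * Y n i j)⁻¹)
  | c1 (a b : Sym) {i j k l : ℕ} (hi : Idx n i) (hj : Idx n j) (hk : Idx n k)
      (hl : Idx n l) (hc : cyc4 i j k l) :
      Rel n (gsym n a i j * gsym n b k l * (gsym n b k l * gsym n a i j)⁻¹)
  | c2 (a b c : Sym) {i j k : ℕ} (hi : Idx n i) (hj : Idx n j) (hk : Idx n k)
      (h : C2ok i j k a b c) :
      Rel n (gsym n a i j * (gsym n b i k * gsym n c j k) *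
             (gsym n b i k * gsym n c j k * gsym n a i j)⁻¹)
  | c3 (a b : Sym) {i j k l : ℕ} (hi : Idx n i) (hj : Idx n j) (hk : Idx n k)
      (hl : Idx n l) (hc : cyc4 i j k l) :
      Rel n (gsym n a i k * (P n j k * gsym n b j l * (P n j k)⁻¹) *
             (P n j k * gsym n b j l * (P n j k)⁻¹ * gsym n a i k)⁻¹)
  | mx {i j : ℕ} (hij : Idx2 n i j) :
      Rel n (X n i j * P n i j * T n i * (P n i j * T n i * X n i j)⁻¹)
  | my {i j : ℕ} (hij : Idx2 n i j) :
      Rel n (Y n i j * P n i j * T n j * (P n i j * T n j * Y n i j)⁻¹)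

/-- The presented group `G = ⟨S ∣ R⟩`. -/
abbrev GG (n : ℕ) := FG n ⧸ Subgroup.normalClosure {w : FG n | Rel n w}

/-- The quotient homomorphism `π : F → G`. -/
def piG (n : ℕ) : FG n →* GG n := QuotientGroup.mk' _

/-- The map defining `Φ_{σ_m}` on generators. -/
def phiSigmaMap (n m : ℕ) : Gen n → FG n
  | Gen.pair s i j _ =>
      if i = m ∧ j = m + 1 then
        match s with
        | Sym.p => P n m (m+1)
        | Sym.x => (T n (m+1))⁻¹ * Y n m (m+1) * T n (m+1)
        | Sym.y => X n m (m+1)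
      else if i = m then gsym n s (m+1) j
      else if j = m then gsym n s (m+1) i
      else if i = m + 1 then P n m (m+1) * gsym n s m j * (P n m (m+1))⁻¹
      else if j = m + 1 then P n m (m+1) * gsym n s m i * (P n m (m+1))⁻¹
      else gsym n s i j
  | Gen.t k _ =>
      if k = m then T n (m+1) else if k = m + 1 then T n m else T n k

/-- `Φ_{σ_m} : F → F`. -/
def phiSigma (n m : ℕ) : FG n →* FG n := FreeGroup.lift (phiSigmaMap n m)

/-- The map defining `Ψ_{σ_m}` on generators. -/
def psiSigmaMap (n m : ℕ) : Gen n → FG n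
  | Gen.pair s i j _ =>
      if i = m ∧ j = m + 1 then
        match s with
        | Sym.p => P n m (m+1)
        | Sym.x => Y n m (m+1)
        | Sym.y => T n m * X n m (m+1) * (T n m)⁻¹
      else if i = m then (P n m (m+1))⁻¹ * gsym n s (m+1) j * P n m (m+1)
      else if j = m then (P n m (m+1))⁻¹ * gsym n s (m+1) i * P n m (m+1)
      else if i = m + 1 then gsym n s m j
      else if j = m + 1 then gsym n s m i
      else gsym n s i j
  | Gen.t k _ =>
      if k = m then T n (m+1) else if k = m + 1 then T n m else T n k

/-- `Ψ_{σ_m} : F → F`. -/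
def psiSigma (n m : ℕ) : FG n →* FG n := FreeGroup.lift (psiSigmaMap n m)

/-- The map defining `Φ_{τ_m}` on generators. -/
def phiTauMap (n m : ℕ) : Gen n → FG n
  | Gen.pair s i j _ =>
      match s with
      | Sym.p => P n i j
      | Sym.x => if m = i then (X n i j)⁻¹ * P n i j else X n i j
      | Sym.y => if m = j then (Y n i j)⁻¹ * P n i j else Y n i j
  | Gen.t k _ => T n k

/-- `Φ_{τ_m} : F → F`. -/
def phiTau (n m : ℕ) : FG n →* FG n := FreeGroup.lift (phiTauMap n m)

/-- The map defining `Ψ_{τ_m}` on generators. -/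
def psiTauMap (n m : ℕ) : Gen n → FG n
  | Gen.pair s i j _ =>
      match s with
      | Sym.p => P n i j
      | Sym.x => if m = i then P n i j * (X n i j)⁻¹ else X n i j
      | Sym.y => if m = j then P n i j * (Y n i j)⁻¹ else Y n i j
  | Gen.t k _ => T n k

/-- `Ψ_{τ_m} : F → F`. -/
def psiTau (n m : ℕ) : FG n →* FG n := FreeGroup.lift (psiTauMap n m)

/-!
Both sides are homomorphisms out of the free group `F`, so it suffices to compare them on
generators. A letter `α_{ml}` or `α_{m+1,l}` with `l ∉ {m, m+1}` is sent by `Ψ_{σ_m}²` to its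
`p_{m,m+1}`-conjugate already in `F`. Letters disjoint from `{m, m+1}` and the `t_k` are fixed by
`Ψ_{σ_m}²` and commute with `p_{m,m+1}` by (C1) and (C-pt). Finally `Ψ_{σ_m}²` sends `x_{m,m+1}` to
`t_m x_{m,m+1} t_m⁻¹` and `y_{m,m+1}` to `t_{m+1} y_{m,m+1} t_{m+1}⁻¹`, and the mixed relations
(M-x), (M-y), written as `t α t⁻¹ = p⁻¹ α p`, identify these with the conjugates by `p_{m,m+1}`.
-/

section PsiSigmaSquare

variable {n m : ℕ}

lemma piG_eq_of_rel {u v : FG n} (h : Rel n (u * v⁻¹)) : piG n u = piG n v := by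
  rw [← mul_inv_eq_one, ← map_inv, ← map_mul, piG, QuotientGroup.mk'_apply,
    QuotientGroup.eq_one_iff]
  exact Subgroup.subset_normalClosure h

lemma piG_commute_of_rel {u v : FG n} (h : Rel n (u * v * (v * u)⁻¹)) :
    Commute (piG n u) (piG n v) := by
  have h' := piG_eq_of_rel h
  rwa [map_mul, map_mul] at h'

lemma mul_mul_inv_eq_inv_mul_mul_of_mul_mul_eq {G : Type*} [Group G] {a b c : G}
    (h : a * b * c = b * c * a) : c * a * c⁻¹ = b⁻¹ * a * b :=
  calc c * a * c⁻¹ = b⁻¹ * (b * c * a) * c⁻¹ := by group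
    _ = b⁻¹ * (a * b * c) * c⁻¹ := by rw [h]
    _ = b⁻¹ * a * b := by group

lemma gsym_comm (s : Sym) (i j : ℕ) : gsym n s i j = gsym n s j i := by
  simp only [gsym, min_comm, max_comm]

lemma gsym_eq_of (s : Sym) {i j : ℕ} (h : Idx2 n i j) :
    gsym n s i j = FreeGroup.of (Gen.pair s i j h) := by
  rw [gsym]
  simp only [min_eq_left h.2.1.le, max_eq_right h.2.1.le]
  exact dif_pos h

lemma Idx2.idx_fst {i j : ℕ} (h : Idx2 n i j) : Idx n i := ⟨h.1, by obtain ⟨-, h₂, h₃⟩ := h; omega⟩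

lemma Idx2.idx_snd {i j : ℕ} (h : Idx2 n i j) : Idx n j := ⟨by obtain ⟨h₁, h₂, -⟩ := h; omega, h.2.2⟩

lemma T_eq_of {k : ℕ} (hk : Idx n k) : T n k = FreeGroup.of (Gen.t k hk) := dif_pos hk

lemma psiSigma_T {k : ℕ} (hk : Idx n k) :
    psiSigma n m (T n k) =
      if k = m then T n (m + 1) else if k = m + 1 then T n m else T n k := by
  conv_lhs => rw [T_eq_of hk, psiSigma, FreeGroup.lift_apply_of]
  rfl

lemma psiSigma_gsym {s : Sym} {i j : ℕ} (h : Idx2 n i j) :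
    psiSigma n m (gsym n s i j) = psiSigmaMap n m (Gen.pair s i j h) := by
  rw [gsym_eq_of s h, psiSigma, FreeGroup.lift_apply_of]

lemma psiSigma_P (hm : Idx2 n m (m + 1)) : psiSigma n m (P n m (m + 1)) = P n m (m + 1) := by
  rw [P, psiSigma_gsym hm]
  simp [psiSigmaMap, P]

lemma psiSigma_X (hm : Idx2 n m (m + 1)) : psiSigma n m (X n m (m + 1)) = Y n m (m + 1) := by
  rw [X, psiSigma_gsym hm]
  simp [psiSigmaMap]

lemma psiSigma_Y (hm : Idx2 n m (m + 1)) :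
    psiSigma n m (Y n m (m + 1)) = T n m * X n m (m + 1) * (T n m)⁻¹ := by
  rw [Y, psiSigma_gsym hm]
  simp [psiSigmaMap]

lemma psiSigma_gsym_m (s : Sym) {l : ℕ} (hl : Idx n l) (hlm : l ≠ m) (hlm' : l ≠ m + 1)
    (hm : Idx2 n m (m + 1)) :
    psiSigma n m (gsym n s m l) = (P n m (m + 1))⁻¹ * gsym n s (m + 1) l * P n m (m + 1) := by
  unfold Idx Idx2 at *
  rcases Nat.lt_or_gt_of_ne hlm with hl' | hl'
  · rw [gsym_comm, psiSigma_gsym (show Idx2 n l m by unfold Idx2; omega)]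
    simp only [psiSigmaMap]
    split_ifs <;> first | omega | rw [gsym_comm]
  · rw [psiSigma_gsym (show Idx2 n m l by unfold Idx2; omega)]
    simp only [psiSigmaMap]
    split_ifs <;> first | omega | rfl

lemma psiSigma_gsym_m_succ (s : Sym) {l : ℕ} (hl : Idx n l) (hlm : l ≠ m) (hlm' : l ≠ m + 1)
    (hm : Idx2 n m (m + 1)) :
    psiSigma n m (gsym n s (m + 1) l) = gsym n s m l := by
  unfold Idx Idx2 at *
  rcases Nat.lt_or_gt_of_ne hlm with hl' | hl'
  · rw [gsym_comm, psiSigma_gsym (show Idx2 n l (m + 1) by unfold Idx2; omega)]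
    simp only [psiSigmaMap]
    split_ifs <;> first | omega | rw [gsym_comm]
  · rw [psiSigma_gsym (show Idx2 n (m + 1) l by unfold Idx2; omega)]
    simp only [psiSigmaMap]
    split_ifs <;> first | omega | rfl

lemma psiSigma_gsym_of_disjoint (s : Sym) {k l : ℕ} (hkl : Idx2 n k l) (hk : k ≠ m)
    (hk' : k ≠ m + 1) (hl : l ≠ m) (hl' : l ≠ m + 1) :
    psiSigma n m (gsym n s k l) = gsym n s k l := by
  rw [psiSigma_gsym hkl]
  simp only [psiSigmaMap]
  split_ifs <;> first | omega | rfl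

lemma psiSigma_sq_T (hm : Idx2 n m (m + 1)) {k : ℕ} (hk : Idx n k) :
    psiSigma n m (psiSigma n m (T n k)) = T n k := by
  rw [psiSigma_T hk]
  split_ifs with hkm hkm'
  · subst hkm
    simp [psiSigma_T hm.idx_snd]
  · subst hkm'
    simp [psiSigma_T hm.idx_fst]
  · rw [psiSigma_T hk, if_neg hkm, if_neg hkm']

lemma psiSigma_sq_gsym_m (s : Sym) {l : ℕ} (hl : Idx n l) (hlm : l ≠ m) (hlm' : l ≠ m + 1)
    (hm : Idx2 n m (m + 1)) :
    psiSigma n m (psiSigma n m (gsym n s m l)) =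
      (P n m (m + 1))⁻¹ * gsym n s m l * P n m (m + 1) := by
  rw [psiSigma_gsym_m s hl hlm hlm' hm, map_mul, map_mul, map_inv, psiSigma_P hm,
    psiSigma_gsym_m_succ s hl hlm hlm' hm]

lemma psiSigma_sq_gsym_m_succ (s : Sym) {l : ℕ} (hl : Idx n l) (hlm : l ≠ m)
    (hlm' : l ≠ m + 1) (hm : Idx2 n m (m + 1)) :
    psiSigma n m (psiSigma n m (gsym n s (m + 1) l)) =
      (P n m (m + 1))⁻¹ * gsym n s (m + 1) l * P n m (m + 1) := by
  rw [psiSigma_gsym_m_succ s hl hlm hlm' hm, psiSigma_gsym_m s hl hlm hlm' hm]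

lemma piG_psiSigma_sq_X (hm : Idx2 n m (m + 1)) :
    piG n (psiSigma n m (psiSigma n m (X n m (m + 1)))) =
      (piG n (P n m (m + 1)))⁻¹ * piG n (X n m (m + 1)) * piG n (P n m (m + 1)) := by
  have hmx := piG_eq_of_rel (Rel.mx hm)
  simp only [map_mul] at hmx
  rw [psiSigma_X hm, psiSigma_Y hm, map_mul, map_mul, map_inv]
  exact mul_mul_inv_eq_inv_mul_mul_of_mul_mul_eq hmx

lemma piG_psiSigma_sq_Y (hm : Idx2 n m (m + 1)) :
    piG n (psiSigma n m (psiSigma n m (Y n m (m + 1)))) =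
      (piG n (P n m (m + 1)))⁻¹ * piG n (Y n m (m + 1)) * piG n (P n m (m + 1)) := by
  have hmy := piG_eq_of_rel (Rel.my hm)
  simp only [map_mul] at hmy
  simp only [psiSigma_Y hm, map_mul, map_inv, psiSigma_T hm.idx_fst, ↓reduceIte, psiSigma_X hm]
  exact mul_mul_inv_eq_inv_mul_mul_of_mul_mul_eq hmy

lemma piG_commute_P_gsym_of_disjoint (s : Sym) {k l : ℕ} (hkl : Idx2 n k l) (hk : k ≠ m)
    (hk' : k ≠ m + 1) (hl : l ≠ m) (hl' : l ≠ m + 1) (hm : Idx2 n m (m + 1)) :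
    Commute (piG n (P n m (m + 1))) (piG n (gsym n s k l)) := by
  have hkl' := hkl.2.1
  by_cases hsep : k < m ∧ m + 1 < l
  · rw [gsym_comm]
    exact (piG_commute_of_rel (Rel.c1 s Sym.p hkl.idx_snd hkl.idx_fst hm.idx_fst hm.idx_snd
      (by unfold cyc4; omega))).symm
  · exact (piG_commute_of_rel (Rel.c1 s Sym.p hkl.idx_fst hkl.idx_snd hm.idx_fst hm.idx_snd
      (by unfold cyc4; omega))).symm

lemma piG_psiSigma_sq_gsym (s : Sym) {i j : ℕ} (hij : Idx2 n i j) (hm : Idx2 n m (m + 1)) :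
    piG n (psiSigma n m (psiSigma n m (gsym n s i j))) =
      (piG n (P n m (m + 1)))⁻¹ * piG n (gsym n s i j) * piG n (P n m (m + 1)) := by
  by_cases hmm : i = m ∧ j = m + 1
  · obtain ⟨rfl, rfl⟩ := hmm
    cases s
    · rw [← P, psiSigma_P hm, psiSigma_P hm]
      group
    · exact piG_psiSigma_sq_X hm
    · exact piG_psiSigma_sq_Y hm
  by_cases hdisj : i ≠ m ∧ i ≠ m + 1 ∧ j ≠ m ∧ j ≠ m + 1
  · obtain ⟨him, him', hjm, hjm'⟩ := hdisj
    rw [psiSigma_gsym_of_disjoint s hij him him' hjm hjm',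
      psiSigma_gsym_of_disjoint s hij him him' hjm hjm']
    exact (piG_commute_P_gsym_of_disjoint s hij him him' hjm hjm' hm).inv_mul_cancel.symm
  suffices h : psiSigma n m (psiSigma n m (gsym n s i j)) =
      (P n m (m + 1))⁻¹ * gsym n s i j * P n m (m + 1) by
    simp only [h, map_mul, map_inv]
  have hij' := hij.2.1
  rcases (by omega : i = m ∨ j = m ∨ i = m + 1 ∨ j = m + 1) with rfl | rfl | rfl | rfl
  · exact psiSigma_sq_gsym_m s (Idx2.idx_snd hij) (by omega) (by omega) hm
  · rw [gsym_comm]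
    exact psiSigma_sq_gsym_m s (Idx2.idx_fst hij) (by omega) (by omega) hm
  · exact psiSigma_sq_gsym_m_succ s (Idx2.idx_snd hij) (by omega) (by omega) hm
  · rw [gsym_comm]
    exact psiSigma_sq_gsym_m_succ s (Idx2.idx_fst hij) (by omega) (by omega) hm

lemma piG_psiSigma_sq_of (hm : Idx2 n m (m + 1)) (g : Gen n) :
    piG n (psiSigma n m (psiSigma n m (FreeGroup.of g))) =
      (piG n (P n m (m + 1)))⁻¹ * piG n (FreeGroup.of g) * piG n (P n m (m + 1)) := by
  cases g with
  | t k hk =>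
    rw [← T_eq_of hk, psiSigma_sq_T hm hk]
    exact (piG_commute_of_rel (Rel.cpt hm hk)).inv_mul_cancel.symm
  | pair s i j hij =>
    rw [← gsym_eq_of s hij]
    exact piG_psiSigma_sq_gsym s hij hm

end PsiSigmaSquare

theorem psiSigma_sq_general (n : ℕ) (m : ℕ) (hm : 1 ≤ m ∧ m ≤ n - 1)
    (u : FG n) :
    piG n (psiSigma n m (psiSigma n m u)) =
      (piG n (P n m (m+1)))⁻¹ * piG n u * piG n (P n m (m+1)) := by
  have hm' : Idx2 n m (m + 1) := ⟨hm.1, m.lt_succ_self, by omega⟩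
  have h := FreeGroup.ext_hom ((piG n).comp ((psiSigma n m).comp (psiSigma n m)))
    ((MulAut.conj (piG n (P n m (m + 1)))⁻¹).toMonoidHom.comp (piG n))
    (fun g => by simpa using piG_psiSigma_sq_of hm' g)
  simpa using DFunLike.congr_fun h u

/-- For `1 ≤ m ≤ n-1` and all `u ∈ F`,
`Ψ_{σ_m}(Ψ_{σ_m}(u)) =_R p_{m,m+1}⁻¹ u p_{m,m+1}`. -/
theorem psiSigma_sq (n : ℕ) (hn : 2 ≤ n) (m : ℕ) (hm : 1 ≤ m ∧ m ≤ n - 1)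
    (u : FG n) :
    piG n (psiSigma n m (psiSigma n m u)) =
      (piG n (P n m (m+1)))⁻¹ * piG n u * piG n (P n m (m+1)) :=
  psiSigma_sq_general n m hm u

end PureHilden
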